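/- (Lemma 1) Let W : ZMod 2 → Y → ℝ≥0 and W' : ZMod 2 → Y' → ℝ≥0 be binary-input discrete memoryless channels with finite output alphabets, let m ∈ ℕ and N = 2^m, and let F_m be the m-fold Kronecker power over ZMod 2 of the matrix [[1,0],[1,1]]. If W is degraded with respect to W', then for every i ∈ [N] the synthetic bit subchannel W_m^{(i)} is degraded with respect to W'_m^{(i)}, and consequently Z(W_m^{(i)}) ≥ Z(W'_m^{(i)}), where Z denotes the Bhattacharyya parameter. -/

import Mathlib

open Finset

/-- A binary-input discrete memoryless channel: the outputs sum to 1 for each input. -/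
def IsBDMC {Y : Type*} [Fintype Y] (W : ZMod 2 → Y → NNReal) : Prop :=
  ∀ u : ZMod 2, ∑ y, W u y = 1

/-- `W` is degraded with respect to `W'`. -/
def Degraded {Y Y' : Type*} [Fintype Y] [Fintype Y'] (W : ZMod 2 → Y → NNReal)
    (W' : ZMod 2 → Y' → NNReal) : Prop :=
  ∃ P : Y' → Y → NNReal, (∀ y', ∑ y, P y' y = 1) ∧
    ∀ (u : ZMod 2) (y : Y), W u y = ∑ y', W' u y' * P y' y

/-- The Bhattacharyya parameter of a B-DMC. -/
noncomputable def bhattacharyya {Y : Type*} [Fintype Y] (W : ZMod 2 → Y → NNReal) : NNReal :=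
  ∑ y, NNReal.sqrt (W 0 y * W 1 y)

/-- The 2×2 Arikan kernel [[1,0],[1,1]] over ZMod 2. -/
def arikanKernel : Matrix (Fin 2) (Fin 2) (ZMod 2) := !![1, 0; 1, 1]

/-- The m-fold Kronecker power of the Arikan kernel, naturally reindexed by `Fin (2^m)`. -/
def polarMatrix : (m : ℕ) → Matrix (Fin (2 ^ m)) (Fin (2 ^ m)) (ZMod 2)
  | 0 => 1
  | m + 1 =>
    Matrix.reindex (finProdFinEquiv.trans (finCongr (by ring : 2 * 2 ^ m = 2 ^ (m + 1))))
      (finProdFinEquiv.trans (finCongr (by ring : 2 * 2 ^ m = 2 ^ (m + 1))))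
      (Matrix.kroneckerMap (· * ·) arikanKernel (polarMatrix m))

/-- The `i`-th synthetic bit subchannel `W_m^{(i)}` of `W`, with input `u_i` and
output `(y_0^{N-1}, u_0^{i-1})`, where `N = 2^m`:
`W_m^{(i)}(y_0^{N-1}, u_0^{i-1} | u_i) = 2^{-(N-1)} ∑_{u_{i+1}^{N-1}} ∏_j W((u F_m)_j)(y_j)`. -/
noncomputable def subchannel {Y : Type*} [Fintype Y] (W : ZMod 2 → Y → NNReal) (m : ℕ)
    (i : Fin (2 ^ m)) :
    ZMod 2 → (Fin (2 ^ m) → Y) × (Fin (i : ℕ) → ZMod 2) → NNReal :=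
  fun ui out =>
    ((2 : NNReal) ^ (2 ^ m - 1))⁻¹ *
      ∑ uf : { j : Fin (2 ^ m) // (i : ℕ) < (j : ℕ) } → ZMod 2,
        ∏ j : Fin (2 ^ m),
          W (Matrix.vecMul
              (fun k : Fin (2 ^ m) =>
                if h : (k : ℕ) < (i : ℕ) then out.2 ⟨(k : ℕ), h⟩
                else if h' : (i : ℕ) < (k : ℕ) then uf ⟨k, h'⟩
                else ui)
              (polarMatrix m) j)
            (out.1 j)

/-! A degrading kernel `P : Y' → Y → ℝ≥0` for `W ⪯ W'` acts letter by letter on output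
words: `∏ⱼ P(y'ⱼ, yⱼ)` degrades the `N`-fold product channel of `W'` to that of `W`. Since the
subchannel `W_m^{(i)}` is a marginal of this product channel and the side information
`u_0^{i-1}` is passed on unchanged, the same kernel (identity on `u_0^{i-1}`) degrades
`W'_m^{(i)}` to `W_m^{(i)}`. Degradation can only increase the Bhattacharyya parameter by
Cauchy–Schwarz. -/

theorem sum_prod_eq_one_of_sum_eq_one {ι Y Y' : Type*} [Fintype ι] [DecidableEq ι] [Fintype Y]
    {P : Y' → Y → NNReal} (hP : ∀ y', ∑ y, P y' y = 1)
    (y' : ι → Y') : ∑ y : ι → Y, ∏ j, P (y' j) (y j) = 1 := by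
  rw [← Fintype.piFinset_univ, ← prod_univ_sum]
  simp [hP]

theorem prod_eq_sum_prod_mul_prod {ι α Y Y' : Type*} [Fintype ι] [DecidableEq ι] [Fintype Y']
    {W : α → Y → NNReal} {W' : α → Y' → NNReal}
    {P : Y' → Y → NNReal} (hWP : ∀ u y, W u y = ∑ y', W' u y' * P y' y)
    (x : ι → α) (y : ι → Y) :
    ∏ j, W (x j) (y j) = ∑ y' : ι → Y', (∏ j, W' (x j) (y' j)) * ∏ j, P (y' j) (y j) := by
  simp only [hWP, ← prod_mul_distrib]
  rw [prod_univ_sum, Fintype.piFinset_univ]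

theorem degraded_of_eq_sum_mul_fst {Y Y' S : Type*} [Fintype Y] [Fintype Y'] [Fintype S]
    [DecidableEq S] {V : ZMod 2 → Y × S → NNReal} {V' : ZMod 2 → Y' × S → NNReal}
    {Q : Y' → Y → NNReal} (hQ : ∀ y', ∑ y, Q y' y = 1)
    (hVQ : ∀ u y s, V u (y, s) = ∑ y', V' u (y', s) * Q y' y) : Degraded V V' := by
  refine ⟨fun o' o => if o.2 = o'.2 then Q o'.1 o.1 else 0, fun o' => ?_, fun u o => ?_⟩
  · simp [Fintype.sum_prod_type, sum_ite_eq', hQ]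
  · simp [Fintype.sum_prod_type, hVQ, mul_ite, sum_ite_eq]

theorem Degraded.bhattacharyya_le {Y Y' : Type*} [Fintype Y] [Fintype Y']
    {W : ZMod 2 → Y → NNReal} {W' : ZMod 2 → Y' → NNReal} (h : Degraded W W') :
    bhattacharyya W' ≤ bhattacharyya W := by
  obtain ⟨P, hP, hWP⟩ := h
  have split (y' : Y') (y : Y) :
      NNReal.sqrt (W' 0 y' * P y' y) * NNReal.sqrt (W' 1 y' * P y' y) =
        NNReal.sqrt (W' 0 y' * W' 1 y') * P y' y := by
    rw [← NNReal.sqrt_mul, show W' 0 y' * P y' y * (W' 1 y' * P y' y)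
        = W' 0 y' * W' 1 y' * (P y' y * P y' y) by ring, NNReal.sqrt_mul, NNReal.sqrt_mul_self]
  calc bhattacharyya W'
      = ∑ y, ∑ y', NNReal.sqrt (W' 0 y' * P y' y) * NNReal.sqrt (W' 1 y' * P y' y) := by
        rw [bhattacharyya, sum_comm]
        refine sum_congr rfl fun y' _ => ?_
        simp only [split, ← mul_sum, hP, mul_one]
    _ ≤ ∑ y, NNReal.sqrt (∑ y', W' 0 y' * P y' y) * NNReal.sqrt (∑ y', W' 1 y' * P y' y) :=
        sum_le_sum fun y _ => NNReal.sum_sqrt_mul_sqrt_le _ _ _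
    _ = bhattacharyya W := by
        simp only [bhattacharyya, ← hWP, NNReal.sqrt_mul]

theorem subchannel_eq_sum_mul_prod {Y Y' : Type*} [Fintype Y] [Fintype Y']
    {W : ZMod 2 → Y → NNReal} {W' : ZMod 2 → Y' → NNReal} {P : Y' → Y → NNReal}
    (hWP : ∀ u y, W u y = ∑ y', W' u y' * P y' y) (m : ℕ) (i : Fin (2 ^ m)) (u : ZMod 2)
    (y : Fin (2 ^ m) → Y) (v : Fin (i : ℕ) → ZMod 2) :
    subchannel W m i u (y, v) =
      ∑ y', subchannel W' m i u (y', v) * ∏ j, P (y' j) (y j) := by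
  simp only [subchannel, mul_assoc, ← mul_sum, sum_mul]
  rw [sum_comm]
  simp only [prod_eq_sum_prod_mul_prod hWP]

theorem Degraded.subchannel {Y Y' : Type*} [Fintype Y] [Fintype Y']
    {W : ZMod 2 → Y → NNReal} {W' : ZMod 2 → Y' → NNReal} (h : Degraded W W') (m : ℕ)
    (i : Fin (2 ^ m)) : Degraded (subchannel W m i) (subchannel W' m i) := by
  obtain ⟨P, hP, hWP⟩ := h
  exact degraded_of_eq_sum_mul_fst (sum_prod_eq_one_of_sum_eq_one hP)
    (subchannel_eq_sum_mul_prod hWP m i)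

theorem subchannel_degraded_and_bhattacharyya_ge_general {Y Y' : Type*} [Fintype Y] [Fintype Y']
    (W : ZMod 2 → Y → NNReal) (W' : ZMod 2 → Y' → NNReal)
    (m : ℕ) (h : Degraded W W') :
    ∀ i : Fin (2 ^ m),
      Degraded (subchannel W m i) (subchannel W' m i) ∧
        bhattacharyya (subchannel W' m i) ≤ bhattacharyya (subchannel W m i) :=
  fun i => ⟨h.subchannel m i, (h.subchannel m i).bhattacharyya_le⟩

/-- Lemma 1: if `W ⪯ W'`, then `W_m^{(i)} ⪯ W'_m^{(i)}` for all `i`, and hence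
`Z(W_m^{(i)}) ≥ Z(W'_m^{(i)})`. -/
theorem subchannel_degraded_and_bhattacharyya_ge {Y Y' : Type*} [Fintype Y] [Fintype Y']
    (W : ZMod 2 → Y → NNReal) (W' : ZMod 2 → Y' → NNReal)
    (hW : IsBDMC W) (hW' : IsBDMC W') (m : ℕ) (h : Degraded W W') :
    ∀ i : Fin (2 ^ m),
      Degraded (subchannel W m i) (subchannel W' m i) ∧
        bhattacharyya (subchannel W' m i) ≤ bhattacharyya (subchannel W m i) :=
  subchannel_degraded_and_bhattacharyya_ge_general W W' m h
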